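/- Let $C^*$ be a cochain complex of $q$-adically complete modules over $A_R = \mathbb{C}[u,t][[q]]/(ut-q)$ that are $q$-torsion-free in each degree. If each cohomology group of $C^*/qC^*$ is finitely generated over $A = \mathbb{C}[u,t]/(ut)$, then each cohomology group of $C^*$ is finitely generated over $A_R$. -/

import Mathlib

set_option synthInstance.maxHeartbeats 1000000
set_option maxHeartbeats 1000000

noncomputable section

/-- Polynomials `ℂ[u,t]` with `u = X 0`, `t = X 1`. -/
abbrev Pol2 : Type := MvPolynomial (Fin 2) ℂ

/-- The ring `A_R = ℂ[u,t][[q]]/(ut - q)`. -/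
abbrev ARing : Type :=
  (PowerSeries Pol2) ⧸
    (Ideal.span {(PowerSeries.C : Pol2 →+* PowerSeries Pol2) (MvPolynomial.X 0 * MvPolynomial.X 1) - PowerSeries.X})

instance : Algebra ℂ ARing := Ideal.Quotient.algebra ℂ
instance : Module ℂ ARing := Algebra.toModule

/-- The element `u` of `A_R`. -/
def uA : ARing := Ideal.Quotient.mk _ ((PowerSeries.C : Pol2 →+* PowerSeries Pol2) (MvPolynomial.X 0))

/-- The element `t` of `A_R`. -/
def tA : ARing := Ideal.Quotient.mk _ ((PowerSeries.C : Pol2 →+* PowerSeries Pol2) (MvPolynomial.X 1))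

/-- The element `q` of `A_R`. -/
def qA : ARing := Ideal.Quotient.mk _ (PowerSeries.X : PowerSeries Pol2)

/-!
Modulo `q`, the cocycles `Z ⊆ C^{i+1}` land in the finitely generated module over the Noetherian
ring `A = A_R/(q)` spanned by the given classes, so finitely many cocycles `T` generate `Z` modulo
coboundaries `B` and `q C^{i+1}`. Since `C^{i+2}` is `q`-torsion-free, `z = p + b + q w` with
`z, p, b` closed forces `w` to be closed, so `Z = span T + B + q Z`. As `A_R`, `C^i` and
`C^{i+1}` are `q`-adically complete, Nakayama's lemma for complete modules gives `Z = span T + B`.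
-/

open Submodule

section

variable {R : Type*} [CommRing R] {I : Ideal R}
  {M : Type*} [AddCommGroup M] [Module R M] {N : Type*} [AddCommGroup N] [Module R N]

theorem SModEq.map_pow_smul_top (f : M →ₗ[R] N) (n : ℕ) {x y : M}
    (h : x ≡ y [SMOD (I ^ n • ⊤ : Submodule R M)]) :
    f x ≡ f y [SMOD (I ^ n • ⊤ : Submodule R N)] :=
  (h.map f).mono (by rw [map_smul'']; exact smul_mono_right _ le_top)

theorem IsHausdorff.of_injective [IsHausdorff I N] {f : M →ₗ[R] N}
    (hf : Function.Injective f) : IsHausdorff I M :=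
  ⟨fun x hx => hf <| by
    simpa using IsHausdorff.haus ‹_› (f x) fun n => by simpa using (hx n).map_pow_smul_top f n⟩

theorem IsPrecomplete.of_surjective [IsPrecomplete I M] {f : M →ₗ[R] N}
    (hf : Function.Surjective f) : IsPrecomplete I N := by
  rw [← AdicCompletion.of_surjective_iff]
  intro x
  obtain ⟨y, rfl⟩ := AdicCompletion.map_surjective I hf x
  obtain ⟨m, rfl⟩ := AdicCompletion.of_surjective I M y
  exact ⟨f m, (AdicCompletion.map_of I f m).symm⟩

instance IsPrecomplete.prod [IsPrecomplete I M] [IsPrecomplete I N] :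
    IsPrecomplete I (M × N) := by
  refine ⟨fun f hf => ?_⟩
  obtain ⟨a, ha⟩ := IsPrecomplete.prec ‹_› fun hmn =>
    (hf hmn).map_pow_smul_top (LinearMap.fst R M N) _
  obtain ⟨b, hb⟩ := IsPrecomplete.prec ‹_› fun hmn =>
    (hf hmn).map_pow_smul_top (LinearMap.snd R M N) _
  refine ⟨(a, b), fun n => ?_⟩
  simpa using ((ha n).map_pow_smul_top (LinearMap.inl R M N) n).add
    ((hb n).map_pow_smul_top (LinearMap.inr R M N) n)

instance IsPrecomplete.pi {ι : Type*} [Fintype ι] [DecidableEq ι] [IsPrecomplete I M] :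
    IsPrecomplete I (ι → M) := by
  refine ⟨fun f hf => ?_⟩
  choose a ha using fun j => IsPrecomplete.prec ‹_› fun hmn =>
    (hf hmn).map_pow_smul_top (LinearMap.proj (R := R) (φ := fun _ : ι => M) j) _
  refine ⟨a, fun n => ?_⟩
  rw [SModEq.sub_mem, ← Finset.univ_sum_single (f n - a)]
  exact sum_mem fun j _ => by
    simpa [Pi.single_sub] using
      SModEq.sub_mem.mp ((ha j n).map_pow_smul_top (LinearMap.single R (fun _ : ι => M) j) n)

-- Nakayama's lemma for `I`-adically complete modules.
theorem LinearMap.le_range_of_le_range_sup_smul [IsPrecomplete I N] [IsHausdorff I M]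
    (g : N →ₗ[R] M) {Z : Submodule R M} (hg : LinearMap.range g ≤ Z)
    (hZ : Z ≤ LinearMap.range g ⊔ I • Z) : Z ≤ LinearMap.range g := by
  have : IsHausdorff I Z := IsHausdorff.of_injective Z.injective_subtype
  let g' : N →ₗ[R] Z := g.codRestrict Z fun x => hg ⟨x, rfl⟩
  have hsurj : Function.Surjective g' := by
    refine surjective_of_mkQ_comp_surjective (I := I) fun z => ?_
    obtain ⟨z, rfl⟩ := Submodule.mkQ_surjective _ z
    obtain ⟨_, ⟨x, rfl⟩, y, hy, hxy⟩ := mem_sup.mp (hZ z.2)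
    refine ⟨x, (Submodule.Quotient.eq _).mpr ?_⟩
    rw [mem_smul_top_iff]
    simpa [g', ← hxy] using hy
  intro z hz
  obtain ⟨x, hx⟩ := hsurj ⟨z, hz⟩
  exact ⟨x, congrArg Subtype.val hx⟩

theorem isNoetherian_of_isTorsionBySet (I : Ideal R) [IsNoetherianRing (R ⧸ I)]
    [Module.Finite R M] (hM : Module.IsTorsionBySet R M I) : IsNoetherian R M := by
  let _ := hM.module
  have := hM.isScalarTower (S := R)
  have : Module.Finite (R ⧸ I) M := Module.Finite.of_restrictScalars_finite R _ _
  refine ⟨fun P => ?_⟩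
  obtain ⟨T, hT⟩ := IsNoetherian.noetherian (span (R ⧸ I) (P : Set M))
  refine ⟨T, ?_⟩
  rw [← restrictScalars_span R (R ⧸ I) Ideal.Quotient.mk_surjective, hT,
    restrictScalars_span R (R ⧸ I) Ideal.Quotient.mk_surjective, span_eq]

theorem Submodule.exists_finset_le_span_sup (I : Ideal R) [IsNoetherianRing (R ⧸ I)]
    {N Z : Submodule R M} (hN : I • ⊤ ≤ N) (s : Finset M) (hZ : Z ≤ span R s ⊔ N) :
    ∃ T : Finset M, (T : Set M) ⊆ Z ∧ Z ≤ span R T ⊔ N := by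
  classical
  have hQ : Module.IsTorsionBySet R (M ⧸ N) I := fun x a => by
    obtain ⟨x, rfl⟩ := N.mkQ_surjective x
    exact (Quotient.mk_eq_zero N).mpr (hN (smul_mem_smul a.2 mem_top))
  have : IsNoetherian R (span R (s.image N.mkQ : Set (M ⧸ N))) :=
    isNoetherian_of_isTorsionBySet I fun x a => Subtype.ext (@hQ x.1 a)
  have hmap : Z.map N.mkQ ≤ span R (s.image N.mkQ : Set (M ⧸ N)) := by
    rw [Finset.coe_image, ← map_span, map_le_iff_le_comap, comap_map_mkQ, sup_comm]
    exact hZ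
  obtain ⟨T', hT'⟩ := isNoetherian_submodule.mp this _ hmap
  obtain ⟨T, hTZ, rfl⟩ := Finset.subset_set_image_iff.mp
    (show (T' : Set (M ⧸ N)) ⊆ N.mkQ '' Z from map_coe N.mkQ Z ▸ hT' ▸ subset_span)
  refine ⟨T, hTZ, fun z hz => ?_⟩
  have : N.mkQ z ∈ (span R (T : Set M)).map N.mkQ := by
    rw [map_span, ← Finset.coe_image, hT']
    exact mem_map_of_mem hz
  rwa [← mem_comap, comap_map_mkQ, sup_comm] at this

theorem LinearMap.ker_le_sup_span_singleton_smul_ker {M' : Type*} [AddCommGroup M']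
    [Module R M'] {r : R} (hr : ∀ x : M', r • x = 0 → x = 0) {d : M →ₗ[R] M'}
    {P : Submodule R M} (hP : P ≤ LinearMap.ker d) (h : LinearMap.ker d ≤ P ⊔ Ideal.span {r} • ⊤) :
    LinearMap.ker d ≤ P ⊔ Ideal.span {r} • LinearMap.ker d := by
  intro z hz
  obtain ⟨p, hp, _, hy, rfl⟩ := mem_sup.mp (h hz)
  rw [ideal_span_singleton_smul] at hy
  obtain ⟨w, -, rfl⟩ := hy
  have hw : d w = 0 := hr _ <| by
    simpa [LinearMap.mem_ker.mp (hP hp)] using LinearMap.mem_ker.mp hz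
  exact add_mem_sup hp (smul_mem_smul (Ideal.mem_span_singleton_self r) hw)

end

theorem map_span_X_eq_span_qA :
    (Ideal.span {PowerSeries.X}).map (algebraMap (PowerSeries Pol2) ARing) = Ideal.span {qA} := by
  rw [Ideal.map_span, Set.image_singleton]
  rfl

instance isPrecomplete_span_qA : IsPrecomplete (Ideal.span {qA}) ARing := by
  rw [← map_span_X_eq_span_qA, IsPrecomplete.map_algebraMap_iff]
  exact IsPrecomplete.of_surjective (f := Algebra.linearMap (PowerSeries Pol2) ARing)
    Ideal.Quotient.mk_surjective

instance isNoetherianRing_quotient_span_qA : IsNoetherianRing (ARing ⧸ Ideal.span {qA}) := by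
  let π : PowerSeries Pol2 →+* ARing ⧸ Ideal.span {qA} :=
    (Ideal.Quotient.mk _).comp (algebraMap (PowerSeries Pol2) ARing)
  have hX : π PowerSeries.X = 0 :=
    Ideal.Quotient.eq_zero_iff_mem.mpr (Ideal.mem_span_singleton_self qA)
  have hπ : Function.Surjective π :=
    Ideal.Quotient.mk_surjective.comp Ideal.Quotient.mk_surjective
  refine isNoetherianRing_of_surjective Pol2 _ (π.comp PowerSeries.C) fun x => ?_
  obtain ⟨φ, rfl⟩ := hπ x
  refine ⟨PowerSeries.constantCoeff φ, ?_⟩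
  conv_rhs => rw [PowerSeries.eq_X_mul_shift_add_const φ, map_add π, map_mul π, hX,
    zero_mul (M₀ := ARing ⧸ Ideal.span {qA}), zero_add]
  rfl

/-- Let `C*` be a cochain complex of `q`-adically complete, `q`-torsion-free modules over
`A_R = ℂ[u,t][[q]]/(ut-q)`.  If each cohomology group of `C*/qC*` is finitely generated
over `A = A_R/(q)`, then each cohomology group of `C*` is finitely generated over `A_R`.
(Finite generation of `H^{i+1}` is phrased as: there is a finite set of closed elements
whose classes generate the cohomology.) -/
theorem stmt12
    (C : ℤ → Type) [∀ i, AddCommGroup (C i)] [∀ i, Module ARing (C i)]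
    (d : ∀ i, C i →ₗ[ARing] C (i + 1))
    (hd : ∀ i (x : C i), d (i + 1) (d i x) = 0)
    (htf : ∀ i (x : C i), qA • x = 0 → x = 0)
    (hcomp : ∀ i, IsAdicComplete (Ideal.span {qA}) (C i))
    (hfg0 : ∀ i : ℤ, ∃ s : Finset (C (i + 1)),
        (∀ x ∈ s, ∃ x', d (i + 1) x = qA • x') ∧
        ∀ x : C (i + 1), (∃ x', d (i + 1) x = qA • x') →
          x ∈ Submodule.span ARing (s : Set (C (i + 1))) ⊔ LinearMap.range (d i)
              ⊔ Ideal.span {qA} • (⊤ : Submodule ARing (C (i + 1)))) :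
    ∀ i : ℤ, ∃ s : Finset (C (i + 1)),
      (∀ x ∈ s, d (i + 1) x = 0) ∧
      ∀ x : C (i + 1), d (i + 1) x = 0 →
        x ∈ Submodule.span ARing (s : Set (C (i + 1))) ⊔ LinearMap.range (d i) := by
  classical
  intro i
  have := hcomp i
  have := hcomp (i + 1)
  obtain ⟨s, -, hs⟩ := hfg0 i
  set I : Ideal ARing := Ideal.span {qA}
  set Z := LinearMap.ker (d (i + 1))
  set B := LinearMap.range (d i)
  have hBZ : B ≤ Z := LinearMap.range_le_ker_iff.mpr (LinearMap.ext (hd i))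
  have hZ : Z ≤ span ARing s ⊔ (B ⊔ I • ⊤) := fun z hz => by
    rw [← sup_assoc]
    exact hs z ⟨0, by rw [LinearMap.mem_ker.mp hz, smul_zero]⟩
  obtain ⟨T, hTZ, hZT⟩ := exists_finset_le_span_sup I le_sup_right s hZ
  have hZT' : Z ≤ span ARing T ⊔ B ⊔ I • Z :=
    LinearMap.ker_le_sup_span_singleton_smul_ker (htf (i + 1 + 1))
      (sup_le (span_le.mpr hTZ) hBZ) (by rwa [sup_assoc])
  let g := (Fintype.linearCombination ARing (Subtype.val : T → C (i + 1))).coprod (d i)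
  have hg : LinearMap.range g = span ARing T ⊔ B := by
    rw [LinearMap.range_coprod, Fintype.range_linearCombination, Subtype.range_coe]
  refine ⟨T, fun x hx => hTZ hx, fun z hz => ?_⟩
  rw [← hg]
  exact g.le_range_of_le_range_sup_smul (hg ▸ sup_le (span_le.mpr hTZ) hBZ) (hg ▸ hZT') hz

end
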